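/- arXiv:2512.24356 — 3 statements merged into one kernel-verified Lean document; each statement's English description precedes it below -/
import Mathlib

section
/- Let f be a probability density on ℝⁿ, r : ℝⁿ → (0,∞) a measurable function, α > 0, and suppose c := ∫_{ℝⁿ} r(w)^α f(w) dw satisfies 0 < c < ∞. Let V be a random vector in ℝⁿ with Lebesgue density w ↦ (1/c) · r(w)^α · f(w), and let P be an α-Pareto random variable independent of V. Then for every threshold u > 0, the pair (u · P / r(V), V) has joint Lebesgue density (x₀, w) ↦ 1{x₀ · r(w) > u} · α · u^α · x₀^{-α-1} · (1/c) · f(w) on (0,∞) × ℝⁿ. -/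
open MeasureTheory ProbabilityTheory
open scoped ENNReal

/-! Independence makes the law of `(P, V)` the product of the two densities. The map
`(t, w) ↦ (u t / r w, w)` rescales each fibre `ℝ × {w}` by `u / r w`, so it carries Lebesgue
measure to itself with density `r w / u`. In the transported density the factor `r w ^ α` of
the tilt cancels against `(x r w / u) ^ (-α - 1) · r w / u`, leaving `u ^ α x ^ (-α - 1)`. -/

namespace MeasureTheory.Measure

variable {α β : Type*} [MeasurableSpace α] [MeasurableSpace β]

theorem map_withDensity_comp (μ : Measure α) {φ : α → β} (hφ : Measurable φ)
    {g : β → ℝ≥0∞} (hg : Measurable g) :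
    (μ.withDensity (g ∘ φ)).map φ = (μ.map φ).withDensity g := by
  ext s hs
  rw [map_apply hφ hs, withDensity_apply _ (hφ hs), withDensity_apply _ hs,
    setLIntegral_map hs hg hφ]
  rfl

theorem map_volume_prod_fiberwise_mul (ν : Measure β) [SFinite ν] {s : β → ℝ}
    (hs : Measurable s) (hs0 : ∀ w, s w ≠ 0) :
    ((volume : Measure ℝ).prod ν).map (fun p => (s p.2 * p.1, p.2))
      = (volume.prod ν).withDensity (fun p => ENNReal.ofReal |s p.2|⁻¹) := by
  have hφ : Measurable fun p : ℝ × β => (s p.2 * p.1, p.2) := by fun_prop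
  ext A hA
  rw [map_apply hφ hA, prod_apply_symm (hφ hA), withDensity_apply _ hA,
    ← lintegral_indicator hA, lintegral_prod_symm _ ((by fun_prop : Measurable
      fun p : ℝ × β => ENNReal.ofReal |s p.2|⁻¹).indicator hA).aemeasurable]
  refine lintegral_congr fun w => ?_
  have hA_w : MeasurableSet ((fun t => (t, w)) ⁻¹' A) := measurable_prodMk_right hA
  calc volume ((fun t => (t, w)) ⁻¹' ((fun p : ℝ × β => (s p.2 * p.1, p.2)) ⁻¹' A))
      = volume ((s w * ·) ⁻¹' ((fun t => (t, w)) ⁻¹' A)) := rfl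
    _ = ENNReal.ofReal |s w|⁻¹ * volume ((fun t => (t, w)) ⁻¹' A) := by
      rw [Real.volume_preimage_mul_left (hs0 w), abs_inv]
    _ = ∫⁻ t, A.indicator (fun p => ENNReal.ofReal |s p.2|⁻¹) (t, w) := by
      rw [← lintegral_indicator_const hA_w]
      rfl

theorem map_fiberwise_mul_withDensity_prod (ν : Measure β) [SFinite ν] {s : β → ℝ}
    (hs : Measurable s) (hs0 : ∀ w, s w ≠ 0) {g : ℝ → ℝ≥0∞} (hg : Measurable g) :
    ((volume.withDensity g).prod ν).map (fun p => (s p.2 * p.1, p.2))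
      = (volume.prod ν).withDensity (fun p => ENNReal.ofReal |s p.2|⁻¹ * g (p.1 / s p.2)) := by
  have hφ : Measurable fun p : ℝ × β => (s p.2 * p.1, p.2) := by fun_prop
  have hG : Measurable fun p : ℝ × β => g (p.1 / s p.2) := by fun_prop
  have hg_comp : (fun p : ℝ × β => g p.1)
      = (fun p => g (p.1 / s p.2)) ∘ fun p => (s p.2 * p.1, p.2) := by
    funext p
    simp [mul_div_cancel_left₀ _ (hs0 p.2)]
  rw [prod_withDensity_left hg, hg_comp, map_withDensity_comp _ hφ hG,
    map_volume_prod_fiberwise_mul _ hs hs0, ← withDensity_mul _ (by fun_prop) hG]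
  rfl

end MeasureTheory.Measure

open Measure

theorem pareto_density_rescale {α u r : ℝ} (hu : 0 < u) (hr : 0 < r) (x : ℝ) :
    |u / r|⁻¹ * (if 1 < x / (u / r) then α * (x / (u / r)) ^ (-α - 1) else 0) * r ^ α
      = if u < x * r then α * u ^ α * x ^ (-α - 1) else 0 := by
  have hxr : x / (u / r) = x * r / u := by field_simp
  simp only [hxr, one_lt_div hu, abs_of_pos (div_pos hu hr), inv_div]
  split_ifs with h
  · have hx : 0 < x := pos_of_mul_pos_left (hu.trans h) hr.le
    rw [Real.div_rpow (mul_pos hx hr).le hu.le, Real.mul_rpow hx.le hr.le,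
      show -α - 1 = -(α + 1) by ring, Real.rpow_neg hu.le, Real.rpow_neg hr.le,
      Real.rpow_add_one hu.ne', Real.rpow_add_one hr.ne']
    have hu_pow := Real.rpow_pos_of_pos hu α
    have hr_pow := Real.rpow_pos_of_pos hr α
    field_simp
  · simp

theorem stmt_3_general
    {Ω : Type*} [MeasurableSpace Ω] (μ : Measure Ω) [IsProbabilityMeasure μ]
    {n : ℕ} (f : (Fin n → ℝ) → ℝ) (hfm : Measurable f) (hf0 : ∀ x, 0 ≤ f x)
    (r : (Fin n → ℝ) → ℝ) (hrm : Measurable r) (hr0 : ∀ w, 0 < r w)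
    (α : ℝ)
    (c : ℝ) (hcpos : 0 < c)
    (V : Ω → (Fin n → ℝ)) (hVm : Measurable V)
    (hV : Measure.map V μ = volume.withDensity (fun w => ENNReal.ofReal (c⁻¹ * r w ^ α * f w)))
    (P : Ω → ℝ) (hPm : Measurable P)
    (hPlaw : Measure.map P μ
      = volume.withDensity (fun t => ENNReal.ofReal (if 1 < t then α * t ^ (-α - 1) else 0)))
    (hindep : IndepFun P V μ) :
    ∀ u : ℝ, 0 < u →
      Measure.map (fun ω => (u * P ω / r (V ω), V ω)) μ
        = (volume : Measure (ℝ × (Fin n → ℝ))).withDensity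
            (fun p => ENNReal.ofReal
              (if u < p.1 * r p.2 then α * u ^ α * p.1 ^ (-α - 1) * (c⁻¹ * f p.2) else 0)) := by
  intro u hu
  set pP : ℝ → ℝ := fun t => if 1 < t then α * t ^ (-α - 1) else 0
  set pV : (Fin n → ℝ) → ℝ := fun w => c⁻¹ * r w ^ α * f w
  set s : (Fin n → ℝ) → ℝ := fun w => u / r w
  have hpP : Measurable pP := Measurable.ite (measurableSet_lt measurable_const measurable_id)
    (by fun_prop) measurable_const
  have hmap : (fun ω => (u * P ω / r (V ω), V ω))
      = (fun p => (s p.2 * p.1, p.2)) ∘ fun ω => (P ω, V ω) := by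
    funext ω
    simp [s, mul_div_right_comm]
  rw [hmap, ← map_map (by fun_prop) (hPm.prodMk hVm),
    (indepFun_iff_map_prod_eq_prod_map_map hPm.aemeasurable hVm.aemeasurable).mp hindep,
    hPlaw, hV, map_fiberwise_mul_withDensity_prod _ (by fun_prop)
      (fun w => (div_pos hu (hr0 w)).ne') hpP.ennreal_ofReal,
    prod_withDensity_right (by fun_prop), ← withDensity_mul _ (by fun_prop) (by fun_prop),
    volume_eq_prod]
  congr with ⟨x, w⟩
  have hpV : 0 ≤ pV w :=
    mul_nonneg (mul_nonneg (inv_nonneg.2 hcpos.le) (Real.rpow_nonneg (hr0 w).le _)) (hf0 w)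
  rw [Pi.mul_apply, mul_comm, ← ENNReal.ofReal_mul (by positivity),
    ← ENNReal.ofReal_mul' hpV,
    show |s w|⁻¹ * pP (x / s w) * pV w = |s w|⁻¹ * pP (x / s w) * r w ^ α * (c⁻¹ * f w) by ring,
    pareto_density_rescale hu (hr0 w) x, ite_mul, zero_mul]

/-- If `V` has the `r^α`-tilted density `(1/c) r^α f` and `P` is an independent α-Pareto
variable, then for every `u > 0` the pair `(u·P/r(V), V)` has the stated joint density. -/
theorem stmt_3
    {Ω : Type*} [MeasurableSpace Ω] (μ : Measure Ω) [IsProbabilityMeasure μ]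
    {n : ℕ} (f : (Fin n → ℝ) → ℝ) (hfm : Measurable f) (hf0 : ∀ x, 0 ≤ f x)
    (hf1 : ∫ x, f x = 1)
    (r : (Fin n → ℝ) → ℝ) (hrm : Measurable r) (hr0 : ∀ w, 0 < r w)
    (α : ℝ) (hα : 0 < α)
    (c : ℝ) (hc : c = ∫ w, r w ^ α * f w) (hcpos : 0 < c)
    (hcint : Integrable (fun w => r w ^ α * f w))
    (V : Ω → (Fin n → ℝ)) (hVm : Measurable V)
    (hV : Measure.map V μ = volume.withDensity (fun w => ENNReal.ofReal (c⁻¹ * r w ^ α * f w)))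
    (P : Ω → ℝ) (hPm : Measurable P)
    (hPlaw : Measure.map P μ
      = volume.withDensity (fun t => ENNReal.ofReal (if 1 < t then α * t ^ (-α - 1) else 0)))
    (hindep : IndepFun P V μ) :
    ∀ u : ℝ, 0 < u →
      Measure.map (fun ω => (u * P ω / r (V ω), V ω)) μ
        = (volume : Measure (ℝ × (Fin n → ℝ))).withDensity
            (fun p => ENNReal.ofReal
              (if u < p.1 * r p.2 then α * u ^ α * p.1 ^ (-α - 1) * (c⁻¹ * f p.2) else 0)) :=
  stmt_3_general μ f hfm hf0 r hrm hr0 α c hcpos V hVm hV P hPm hPlaw hindep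
end

section
/- Let (E, 𝓔, λ) be a measure space with λ σ-finite, p : E → [0,∞) a probability density with respect to λ, q : E × E → [0,∞) a measurable function such that ∫ q(x, y) λ(dy) = 1 for every x ∈ E, and let a(x, y) := min{ (p(y)·q(y,x)) / (p(x)·q(x,y)), 1 } whenever p(x)·q(x,y) > 0 and a(x,y) := 1 otherwise. Define the Metropolis–Hastings transition kernel K(x, A) := ∫_A q(x,y) a(x,y) λ(dy) + 1{x ∈ A} · (1 − ∫_E q(x,y) a(x,y) λ(dy)). Then K is a Markov kernel and the probability measure π(A) := ∫_A p dλ is invariant for K, i.e., ∫_E K(x, A) p(x) λ(dx) = π(A) for every A ∈ 𝓔. -/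
/-!
The Metropolis–Hastings kernel moves from `x` with sub-probability density `f x y = q x y * a x y`
and puts the missing mass `1 - r x`, `r x = ∫ f x y dλ`, on staying at `x`. The acceptance
probability is chosen so that `p x * f x y = min (p x q x y) (p y q y x)` is symmetric in `x, y`
(detailed balance). Tonelli and this symmetry turn the mass flowing into `A` into `∫_A p r dλ`,
and the mass staying in `A` is `∫_A p (1 - r) dλ`; together they give `π(A)`.
-/

open MeasureTheory ENNReal

section AcceptanceProbability

/-- The acceptance probability of a move with forward weight `A = p x q x y` and backward weight
`B = p y q y x`. -/
noncomputable def acceptanceProb (A B : ℝ) : ℝ :=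
  if 0 < A then min (B / A) 1 else 1

lemma acceptanceProb_le_one (A B : ℝ) : acceptanceProb A B ≤ 1 := by
  unfold acceptanceProb
  split_ifs
  · exact min_le_right _ _
  · exact le_rfl

lemma mul_acceptanceProb {A B : ℝ} (hA : 0 ≤ A) (hB : 0 ≤ B) :
    A * acceptanceProb A B = min A B := by
  unfold acceptanceProb
  rcases hA.lt_or_eq with hA | rfl
  · rw [if_pos hA, mul_min_of_nonneg _ _ hA.le, mul_div_cancel₀ _ hA.ne', mul_one, min_comm]
  · simp [hB]

lemma mul_acceptanceProb_comm {A B : ℝ} (hA : 0 ≤ A) (hB : 0 ≤ B) :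
    A * acceptanceProb A B = B * acceptanceProb B A := by
  rw [mul_acceptanceProb hA hB, mul_acceptanceProb hB hA, min_comm]

lemma measurable_acceptanceProb : Measurable (Function.uncurry acceptanceProb) :=
  Measurable.ite (measurableSet_lt measurable_const measurable_fst)
    ((measurable_snd.div measurable_fst).min measurable_const) measurable_const

end AcceptanceProbability

section RejectionKernel

variable {E : Type*} [MeasurableSpace E] (lam : Measure E) (f : E → E → ℝ≥0∞)

noncomputable def rejectionKernel (x : E) : Measure E :=
  lam.withDensity (f x) + (1 - ∫⁻ y, f x y ∂lam) • Measure.dirac x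

variable {lam f}

lemma rejectionKernel_apply (x : E) {A : Set E} (hA : MeasurableSet A) :
    rejectionKernel lam f x A =
      ∫⁻ y in A, f x y ∂lam + (1 - ∫⁻ y, f x y ∂lam) * A.indicator 1 x := by
  simp [rejectionKernel, withDensity_apply _ hA, Measure.dirac_apply' _ hA]

lemma isProbabilityMeasure_rejectionKernel {x : E} (hx : ∫⁻ y, f x y ∂lam ≤ 1) :
    IsProbabilityMeasure (rejectionKernel lam f x) := by
  constructor
  rw [rejectionKernel_apply x MeasurableSet.univ]
  simpa using add_tsub_cancel_of_le hx

lemma measurable_rejectionKernel_apply [SFinite lam] (hf : Measurable (Function.uncurry f))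
    {A : Set E} (hA : MeasurableSet A) : Measurable fun x => rejectionKernel lam f x A := by
  simp_rw [rejectionKernel_apply _ hA]
  exact (hf.lintegral_prod_right').add
    ((measurable_const.sub hf.lintegral_prod_right').mul (measurable_one.indicator hA))

lemma lintegral_rejectionKernel_mul_of_balance [SFinite lam]
    (hf : Measurable (Function.uncurry f)) (hf1 : ∀ x, ∫⁻ y, f x y ∂lam ≤ 1)
    {P : E → ℝ≥0∞} (hP : Measurable P) (hbal : ∀ x y, P x * f x y = P y * f y x)
    {A : Set E} (hA : MeasurableSet A) :
    ∫⁻ x, rejectionKernel lam f x A * P x ∂lam = ∫⁻ x in A, P x ∂lam := by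
  set r : E → ℝ≥0∞ := fun x => ∫⁻ y, f x y ∂lam
  have hfx : ∀ x, Measurable (f x) := fun x => hf.comp measurable_prodMk_left
  have hstay : Measurable fun x => (1 - r x) * P x :=
    (measurable_const.sub hf.lintegral_prod_right').mul hP
  have hinflow : ∫⁻ x, ∫⁻ y in A, P x * f x y ∂lam ∂lam = ∫⁻ y in A, P y * r y ∂lam := by
    rw [lintegral_lintegral_swap ((hP.comp measurable_fst).mul hf).aemeasurable]
    refine lintegral_congr fun y => ?_
    simp_rw [hbal _ y]
    exact lintegral_const_mul _ (hfx y)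
  calc ∫⁻ x, rejectionKernel lam f x A * P x ∂lam
      = ∫⁻ x, (∫⁻ y in A, P x * f x y ∂lam) + A.indicator (fun x => (1 - r x) * P x) x ∂lam := by
        refine lintegral_congr fun x => ?_
        rw [rejectionKernel_apply x hA, add_mul, lintegral_const_mul _ (hfx x), mul_comm]
        by_cases hx : x ∈ A <;> simp [hx, r]
    _ = ∫⁻ y in A, P y * r y ∂lam + ∫⁻ y in A, (1 - r y) * P y ∂lam := by
        rw [lintegral_add_right _ (hstay.indicator hA), lintegral_indicator hA, hinflow]
    _ = ∫⁻ y in A, P y ∂lam := by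
        rw [← lintegral_add_right _ hstay]
        refine lintegral_congr fun y => ?_
        rw [mul_comm (1 - r y), ← mul_add, add_tsub_cancel_of_le (hf1 y), mul_one]

end RejectionKernel

theorem stmt_8_general
    {E : Type*} [MeasurableSpace E] (lam : Measure E) [SigmaFinite lam]
    (p : E → ℝ) (hpm : Measurable p) (hp0 : ∀ x, 0 ≤ p x)
    (q : E → E → ℝ) (hqm : Measurable (Function.uncurry q)) (hq0 : ∀ x y, 0 ≤ q x y)
    (hq1 : ∀ x, ∫⁻ y, ENNReal.ofReal (q x y) ∂lam = 1)
    (a : E → E → ℝ)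
    (ha : ∀ x y, a x y = if 0 < p x * q x y then min (p y * q y x / (p x * q x y)) 1 else 1)
    (K : E → Measure E)
    (hK : ∀ x, K x = lam.withDensity (fun y => ENNReal.ofReal (q x y * a x y))
        + (1 - ∫⁻ y, ENNReal.ofReal (q x y * a x y) ∂lam) • Measure.dirac x) :
    (∀ x, IsProbabilityMeasure (K x)) ∧
      (∀ A : Set E, MeasurableSet A → Measurable (fun x => K x A)) ∧
      (∀ A : Set E, MeasurableSet A →
        ∫⁻ x, K x A * ENNReal.ofReal (p x) ∂lam = ∫⁻ x in A, ENNReal.ofReal (p x) ∂lam) := by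
  have ha' : ∀ x y, a x y = acceptanceProb (p x * q x y) (p y * q y x) := ha
  have ham : Measurable (Function.uncurry a) := by
    rw [show Function.uncurry a = _ from funext fun z => ha' z.1 z.2]
    exact measurable_acceptanceProb.comp (((hpm.comp measurable_fst).mul hqm).prodMk
      ((hpm.comp measurable_snd).mul (hqm.comp measurable_swap)))
  have hf1 : ∀ x, ∫⁻ y, ENNReal.ofReal (q x y * a x y) ∂lam ≤ 1 := fun x =>
    (hq1 x).le.trans' <| lintegral_mono fun y => ENNReal.ofReal_le_ofReal <|
      mul_le_of_le_one_right (hq0 x y) (ha' x y ▸ acceptanceProb_le_one _ _)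
  have hbal : ∀ x y, ENNReal.ofReal (p x) * ENNReal.ofReal (q x y * a x y) =
      ENNReal.ofReal (p y) * ENNReal.ofReal (q y x * a y x) := fun x y => by
    rw [← ENNReal.ofReal_mul (hp0 x), ← ENNReal.ofReal_mul (hp0 y), ← mul_assoc, ← mul_assoc,
      ha', ha', mul_acceptanceProb_comm (mul_nonneg (hp0 x) (hq0 x y))
        (mul_nonneg (hp0 y) (hq0 y x))]
  have hf : Measurable (Function.uncurry fun x y => ENNReal.ofReal (q x y * a x y)) :=
    (hqm.mul ham).ennreal_ofReal
  obtain rfl : K = rejectionKernel lam fun x y => ENNReal.ofReal (q x y * a x y) := funext hK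
  exact ⟨fun x => isProbabilityMeasure_rejectionKernel (hf1 x),
    fun A hA => measurable_rejectionKernel_apply hf hA,
    fun A hA => lintegral_rejectionKernel_mul_of_balance hf hf1 hpm.ennreal_ofReal hbal hA⟩

/-- The Metropolis–Hastings transition kernel is a Markov kernel and leaves the
target distribution `π(A) = ∫_A p dλ` invariant. -/
theorem stmt_8
    {E : Type*} [MeasurableSpace E] (lam : Measure E) [SigmaFinite lam]
    (p : E → ℝ) (hpm : Measurable p) (hp0 : ∀ x, 0 ≤ p x)
    (hp1 : ∫⁻ x, ENNReal.ofReal (p x) ∂lam = 1)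
    (q : E → E → ℝ) (hqm : Measurable (Function.uncurry q)) (hq0 : ∀ x y, 0 ≤ q x y)
    (hq1 : ∀ x, ∫⁻ y, ENNReal.ofReal (q x y) ∂lam = 1)
    (a : E → E → ℝ)
    (ha : ∀ x y, a x y = if 0 < p x * q x y then min (p y * q y x / (p x * q x y)) 1 else 1)
    (K : E → Measure E)
    (hK : ∀ x, K x = lam.withDensity (fun y => ENNReal.ofReal (q x y * a x y))
        + (1 - ∫⁻ y, ENNReal.ofReal (q x y * a x y) ∂lam) • Measure.dirac x) :
    (∀ x, IsProbabilityMeasure (K x)) ∧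
      (∀ A : Set E, MeasurableSet A → Measurable (fun x => K x A)) ∧
      (∀ A : Set E, MeasurableSet A →
        ∫⁻ x, K x A * ENNReal.ofReal (p x) ∂lam = ∫⁻ x in A, ENNReal.ofReal (p x) ∂lam) :=
  stmt_8_general lam p hpm hp0 q hqm hq0 hq1 a ha K hK
end

section
/- Let α > 0, let r : ℝⁿ → [0,∞) be positively homogeneous of degree 1 (r(t·w) = t·r(w) for all t ≥ 0, w ∈ ℝⁿ), let Θ be a random vector in ℝⁿ with r(Θ) = 1 almost surely, let P be an α-Pareto random variable independent of Θ, and set X := P · Θ. Then X is threshold-stable: for every u ≥ 1 and every measurable set A ⊆ ℝⁿ, ℙ( X/u ∈ A | r(X) > u ) = ℙ( X ∈ A ). In other words, conditionally on an r-exceedance of the level u, the rescaled process X/u has the same law as X. -/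
/-!
On `{r(Θ) = 1}` homogeneity gives `r(X) = P`, so an `r`-exceedance of `u` is the event
`P > u`. Conditionally on `P > u`, the pair `(P/u, Θ)` has the same joint law as `(P, Θ)`:
the event only involves `P`, so `Θ` stays independent of `P/u`, and a Pareto variable
conditioned to exceed `u` and divided by `u` is again Pareto with the same index.
Hence `X/u = (P/u) • Θ` has the law of `X`.
-/

open MeasureTheory ProbabilityTheory Set

def HasParetoTail (ν : Measure ℝ) (α : ℝ) : Prop :=
  ∀ t : ℝ, 1 ≤ t → ν (Ioi t) = ENNReal.ofReal (t ^ (-α))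

namespace HasParetoTail

variable {ν ν' : Measure ℝ} {α : ℝ}

lemma measure_Ioi_of_le_one [IsProbabilityMeasure ν] (hν : HasParetoTail ν α) {t : ℝ}
    (ht : t ≤ 1) : ν (Ioi t) = 1 := by
  have hone : ν (Ioi 1) = 1 := by rw [hν 1 le_rfl]; simp
  exact le_antisymm prob_le_one (hone ▸ measure_mono (Ioi_subset_Ioi ht))

lemma ext [IsProbabilityMeasure ν] [IsProbabilityMeasure ν'] (hν : HasParetoTail ν α)
    (hν' : HasParetoTail ν' α) : ν = ν' := by
  refine ext_of_generate_finite _ (BorelSpace.measurable_eq.trans (borel_eq_generateFrom_Ioi ℝ))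
    isPiSystem_Ioi ?_ (by simp)
  rintro _ ⟨t, rfl⟩
  rcases le_total 1 t with ht | ht
  · rw [hν t ht, hν' t ht]
  · rw [hν.measure_Ioi_of_le_one ht, hν'.measure_Ioi_of_le_one ht]

lemma map_cond_Ioi (hν : HasParetoTail ν α) {u : ℝ} (hu : 1 ≤ u) :
    HasParetoTail ((ν[|Ioi u]).map (u⁻¹ * ·)) α := by
  intro t ht
  have hu0 : 0 < u := one_pos.trans_le hu
  have hpre : (u⁻¹ * ·) ⁻¹' Ioi t = Ioi (u * t) := by
    ext p
    rw [mem_preimage, mem_Ioi, mem_Ioi, inv_mul_eq_div, lt_div_iff₀ hu0, mul_comm]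
  have hinter : Ioi u ∩ Ioi (u * t) = Ioi (u * t) :=
    inter_eq_right.2 (Ioi_subset_Ioi (le_mul_of_one_le_right hu0.le ht))
  have hpos : ENNReal.ofReal (u ^ (-α)) ≠ 0 := by positivity
  rw [Measure.map_apply (measurable_const_mul _) measurableSet_Ioi, hpre,
    cond_apply measurableSet_Ioi, hinter, hν u hu, hν _ (one_le_mul_of_one_le_of_one_le hu ht),
    Real.mul_rpow hu0.le (zero_le_one.trans ht), ENNReal.ofReal_mul (by positivity),
    ← mul_assoc, ENNReal.inv_mul_cancel hpos ENNReal.ofReal_ne_top, one_mul]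

lemma map_cond_Ioi_eq [IsProbabilityMeasure ν] (hν : HasParetoTail ν α) {u : ℝ} (hu : 1 ≤ u) :
    (ν[|Ioi u]).map (u⁻¹ * ·) = ν := by
  have : IsProbabilityMeasure ν[|Ioi u] :=
    cond_isProbabilityMeasure (by rw [hν u hu]; positivity)
  have : IsProbabilityMeasure ((ν[|Ioi u]).map (u⁻¹ * ·)) :=
    Measure.isProbabilityMeasure_map (measurable_const_mul _).aemeasurable
  exact (hν.map_cond_Ioi hu).ext hν

end HasParetoTail

namespace ProbabilityTheory

variable {Ω β γ : Type*} [MeasurableSpace Ω] [MeasurableSpace β] [MeasurableSpace γ]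

lemma cond_congr_set {μ : Measure Ω} {s t : Set Ω} (h : s =ᵐ[μ] t) : μ[|s] = μ[|t] := by
  rw [cond, cond, measure_congr h, Measure.restrict_congr_set h]

lemma map_cond {μ : Measure Ω} {f : Ω → β} (hf : Measurable f) {s : Set β}
    (hs : MeasurableSet s) : (μ.map f)[|s] = (μ[|f ⁻¹' s]).map f := by
  rw [cond, cond, Measure.map_smul, Measure.restrict_map hf hs, Measure.map_apply hf hs]

lemma cond_prod_univ (μ : Measure β) [SFinite μ] (ν : Measure γ) [IsProbabilityMeasure ν]
    (s : Set β) : (μ.prod ν)[|s ×ˢ univ] = μ[|s].prod ν := by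
  rw [cond, cond, Measure.prod_smul_left, ← Measure.restrict_prod_eq_prod_univ,
    Measure.prod_prod, measure_univ, mul_one]

lemma IndepFun.map_cond_rescale_eq {μ : Measure Ω} [IsProbabilityMeasure μ] {α : ℝ}
    {P : Ω → ℝ} {Θ : Ω → β} (hPm : Measurable P) (hΘm : Measurable Θ)
    (hP : HasParetoTail (μ.map P) α) (hindep : IndepFun P Θ μ) {u : ℝ} (hu : 1 ≤ u) :
    (μ[|P ⁻¹' Ioi u]).map (fun ω => (u⁻¹ * P ω, Θ ω)) = μ.map (fun ω => (P ω, Θ ω)) := by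
  have : IsProbabilityMeasure (μ.map P) := Measure.isProbabilityMeasure_map hPm.aemeasurable
  have : IsProbabilityMeasure (μ.map Θ) := Measure.isProbabilityMeasure_map hΘm.aemeasurable
  have hjoint : μ.map (fun ω => (P ω, Θ ω)) = (μ.map P).prod (μ.map Θ) :=
    (indepFun_iff_map_prod_eq_prod_map_map hPm.aemeasurable hΘm.aemeasurable).1 hindep
  have hscale : Measurable (Prod.map (u⁻¹ * ·) id : ℝ × β → ℝ × β) :=
    (measurable_const_mul _).prodMap measurable_id
  calc (μ[|P ⁻¹' Ioi u]).map (fun ω => (u⁻¹ * P ω, Θ ω))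
      = ((μ[|(fun ω => (P ω, Θ ω)) ⁻¹' (Ioi u ×ˢ univ)]).map (fun ω => (P ω, Θ ω))).map
          (Prod.map (u⁻¹ * ·) id) := by
        rw [Measure.map_map hscale (hPm.prodMk hΘm), mk_preimage_prod, preimage_univ,
          inter_univ]
        rfl
    _ = (((μ.map P)[|Ioi u]).map (u⁻¹ * ·)).prod ((μ.map Θ).map id) := by
        rw [← map_cond (hPm.prodMk hΘm) (measurableSet_Ioi.prod MeasurableSet.univ), hjoint,
          cond_prod_univ, Measure.map_prod_map _ _ (measurable_const_mul _) measurable_id]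
    _ = μ.map (fun ω => (P ω, Θ ω)) := by
        rw [hP.map_cond_Ioi_eq hu, Measure.map_id, hjoint]

end ProbabilityTheory

theorem stmt_14_general
    {Ω : Type*} [MeasurableSpace Ω] (μ : Measure Ω) [IsProbabilityMeasure μ]
    {n : ℕ} (α : ℝ)
    (r : (Fin n → ℝ) → ℝ)
    (hhom : ∀ t : ℝ, 0 ≤ t → ∀ w, r (t • w) = t * r w)
    (Θ : Ω → (Fin n → ℝ)) (hΘm : Measurable Θ) (hΘ : ∀ᵐ ω ∂μ, r (Θ ω) = 1)
    (P : Ω → ℝ) (hPm : Measurable P)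
    (hP : ∀ t : ℝ, 1 ≤ t → μ {ω | t < P ω} = ENNReal.ofReal (t ^ (-α)))
    (hindep : IndepFun P Θ μ) :
    ∀ u : ℝ, 1 ≤ u → ∀ A : Set (Fin n → ℝ), MeasurableSet A →
      ProbabilityTheory.cond μ {ω | u < r (P ω • Θ ω)} {ω | u⁻¹ • (P ω • Θ ω) ∈ A}
        = μ {ω | P ω • Θ ω ∈ A} := by
  intro u hu A hA
  have hlaw : HasParetoTail (μ.map P) α := fun t ht => by
    rw [Measure.map_apply hPm measurableSet_Ioi]; exact hP t ht
  have hP_pos : ∀ᵐ ω ∂μ, 0 ≤ P ω := by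
    have hP1 : μ {ω | 1 < P ω} = μ univ := by rw [hP 1 le_rfl, measure_univ]; simp
    filter_upwards [(ae_iff_measure_eq (measurableSet_lt measurable_const hPm).nullMeasurableSet).2
      hP1] with ω h
    exact zero_le_one.trans h.le
  have hexceed : {ω | u < r (P ω • Θ ω)} =ᵐ[μ] P ⁻¹' Ioi u := by
    refine Filter.eventuallyEq_set.2 ?_
    filter_upwards [hΘ, hP_pos] with ω h1 h0
    rw [hhom _ h0, h1, mul_one]
    rfl
  have hsmul : Measurable fun q : ℝ × (Fin n → ℝ) => q.1 • q.2 :=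
    measurable_fst.smul measurable_snd
  have hpair := congrArg (· ((fun q : ℝ × (Fin n → ℝ) => q.1 • q.2) ⁻¹' A))
    (IndepFun.map_cond_rescale_eq hPm hΘm hlaw hindep hu)
  rw [Measure.map_apply ((hPm.const_mul _).prodMk hΘm) (hsmul hA),
    Measure.map_apply (hPm.prodMk hΘm) (hsmul hA)] at hpair
  rw [cond_congr_set hexceed]
  simp_rw [smul_smul]
  exact hpair

/-- Threshold stability of the r-Pareto vector `X = P • Θ`: conditionally on the
r-exceedance `r(X) > u` (for `u ≥ 1`), the rescaled vector `X/u` has the same law as `X`. -/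
theorem stmt_14
    {Ω : Type*} [MeasurableSpace Ω] (μ : Measure Ω) [IsProbabilityMeasure μ]
    {n : ℕ} (α : ℝ) (hα : 0 < α)
    (r : (Fin n → ℝ) → ℝ) (hrm : Measurable r) (hr0 : ∀ w, 0 ≤ r w)
    (hhom : ∀ t : ℝ, 0 ≤ t → ∀ w, r (t • w) = t * r w)
    (Θ : Ω → (Fin n → ℝ)) (hΘm : Measurable Θ) (hΘ : ∀ᵐ ω ∂μ, r (Θ ω) = 1)
    (P : Ω → ℝ) (hPm : Measurable P)
    (hP : ∀ t : ℝ, 1 ≤ t → μ {ω | t < P ω} = ENNReal.ofReal (t ^ (-α)))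
    (hindep : IndepFun P Θ μ) :
    ∀ u : ℝ, 1 ≤ u → ∀ A : Set (Fin n → ℝ), MeasurableSet A →
      ProbabilityTheory.cond μ {ω | u < r (P ω • Θ ω)} {ω | u⁻¹ • (P ω • Θ ω) ∈ A}
        = μ {ω | P ω • Θ ω ∈ A} :=
  stmt_14_general μ α r hhom Θ hΘm hΘ P hPm hP hindep
end
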